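/- arXiv:2602.18937 — 3 statements merged into one kernel-verified Lean document; each statement's English description precedes it below -/
import Mathlib

section
/- Let n, k be positive natural numbers with k ≤ n, and let J_n = [[0, I_n], [-I_n, 0]] ∈ ℝ^{2n×2n} and J_k = [[0, I_k], [-I_k, 0]] ∈ ℝ^{2k×2k}. If S ∈ ℝ^{2n×2k} has J-orthogonal columns (Sᵀ J_n S = J_k) and H ∈ ℝ^{2n×2n} is Hamiltonian (H J_n = (H J_n)ᵀ), then the projected matrix (J_kᵀ Sᵀ J_n) H S ∈ ℝ^{2k×2k} is Hamiltonian, i.e., ((J_kᵀ Sᵀ J_n) H S) J_k = (((J_kᵀ Sᵀ J_n) H S) J_k)ᵀ. -/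
/-!
Since `Jₙᵀ = -Jₙ` and `Jₙ² = -1`, we have `Jₙ H = Jₙᵀ (H Jₙ) Jₙ`, so `Jₙ H` is symmetric
whenever `H` is Hamiltonian. The projected matrix times `Jₖ` is the congruence
`(S Jₖ)ᵀ (Jₙ H) (S Jₖ)` of that symmetric matrix, hence symmetric.
-/

open Matrix

/-- `J m = [[0, Iₘ], [-Iₘ, 0]]`, the canonical skew-symmetric matrix. -/
def Jmat (m : ℕ) : Matrix (Fin m ⊕ Fin m) (Fin m ⊕ Fin m) ℝ :=
  Matrix.fromBlocks 0 1 (-1) 0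

theorem Matrix.IsSymm.transpose_mul_mul {m n α : Type*} [Fintype m] [CommSemiring α]
    {A : Matrix m m α} (hA : A.IsSymm) (B : Matrix m n α) : (Bᵀ * A * B).IsSymm := by
  simp only [IsSymm, transpose_mul, transpose_transpose, hA.eq, Matrix.mul_assoc]

theorem Jmat_transpose (m : ℕ) : (Jmat m)ᵀ = -Jmat m := by
  simp [Jmat, fromBlocks_transpose, fromBlocks_neg]

theorem Jmat_mul_self (m : ℕ) : Jmat m * Jmat m = -1 := by
  simp [Jmat, fromBlocks_multiply, ← fromBlocks_one, fromBlocks_neg]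

theorem Jmat_mul_eq_transpose_mul_mul (m : ℕ) (H : Matrix (Fin m ⊕ Fin m) (Fin m ⊕ Fin m) ℝ) :
    Jmat m * H = (Jmat m)ᵀ * (H * Jmat m) * Jmat m := by
  rw [Matrix.mul_assoc, Matrix.mul_assoc, Jmat_mul_self, Jmat_transpose]
  simp

theorem isSymm_Jmat_mul_of_isSymm_mul_Jmat {m : ℕ} {H : Matrix (Fin m ⊕ Fin m) (Fin m ⊕ Fin m) ℝ}
    (hH : (H * Jmat m).IsSymm) : (Jmat m * H).IsSymm := by
  rw [Jmat_mul_eq_transpose_mul_mul]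
  exact hH.transpose_mul_mul _

theorem projected_matrix_hamiltonian_general (n k : ℕ)
    (S : Matrix (Fin n ⊕ Fin n) (Fin k ⊕ Fin k) ℝ)
    (H : Matrix (Fin n ⊕ Fin n) (Fin n ⊕ Fin n) ℝ)
    (hHam : H * Jmat n = (H * Jmat n)ᵀ) :
    (((Jmat k)ᵀ * Sᵀ * Jmat n) * H * S) * Jmat k
      = ((((Jmat k)ᵀ * Sᵀ * Jmat n) * H * S) * Jmat k)ᵀ := by
  have hJH : (Jmat n * H).IsSymm := isSymm_Jmat_mul_of_isSymm_mul_Jmat hHam.symm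
  have hcongr : ((Jmat k)ᵀ * Sᵀ * Jmat n) * H * S * Jmat k
      = (S * Jmat k)ᵀ * (Jmat n * H) * (S * Jmat k) := by
    simp only [transpose_mul, Matrix.mul_assoc]
  rw [hcongr]
  exact (hJH.transpose_mul_mul _).eq.symm

/-- If `S ∈ ℝ^{2n×2k}` has `J`-orthogonal columns and `H ∈ ℝ^{2n×2n}` is
Hamiltonian, then the projected matrix `(Jₖᵀ Sᵀ Jₙ) H S` is Hamiltonian. -/
theorem projected_matrix_hamiltonian (n k : ℕ) (hn : 0 < n) (hk : 0 < k) (hkn : k ≤ n)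
    (S : Matrix (Fin n ⊕ Fin n) (Fin k ⊕ Fin k) ℝ)
    (H : Matrix (Fin n ⊕ Fin n) (Fin n ⊕ Fin n) ℝ)
    (hS : Sᵀ * Jmat n * S = Jmat k)
    (hHam : H * Jmat n = (H * Jmat n)ᵀ) :
    (((Jmat k)ᵀ * Sᵀ * Jmat n) * H * S) * Jmat k
      = ((((Jmat k)ᵀ * Sᵀ * Jmat n) * H * S) * Jmat k)ᵀ :=
  projected_matrix_hamiltonian_general n k S H hHam
end

section
/- Let n be a positive natural number, let A ∈ ℝ^{n×n}, let b ∈ ℝ^n, and define φ(A) = Σ_{k≥0} A^k / (k+1)! ∈ ℝ^{n×n}. Let Â ∈ ℝ^{(n+1)×(n+1)} be the block matrix [[A, b], [0, 0]] (i.e., the top-left n×n block is A, the top-right n×1 block is b, and the last row is zero). Then the matrix exponential of Â has the block form exp(Â) = [[exp(A), φ(A) b], [0, 1]]; in particular, the top-right n×1 block of exp(Â) equals φ(A) b. -/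
open Matrix

/-- `φ(A) = Σ_{k≥0} Aᵏ/(k+1)!`, the matrix version of `φ(z) = (eᶻ - 1)/z`. -/
noncomputable def phiMat (n : ℕ) (A : Matrix (Fin n) (Fin n) ℝ) :
    Matrix (Fin n) (Fin n) ℝ :=
  ∑' k : ℕ, ((k + 1).factorial : ℝ)⁻¹ • A ^ k

/-!
Since `Â^(k+1) = [[A^(k+1), A^k b], [0, 0]]`, the exponential series of `Â` can be summed block
by block: past the constant term `1`, the corner collects `Σ A^(k+1)/(k+1)! = exp A - 1` and the
column collects `Σ A^k b/(k+1)! = φ(A) b`.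
-/

open Nat NormedSpace

section ExpSeries

variable {𝕂 𝔸 : Type*} [RCLike 𝕂] [NormedRing 𝔸] [NormedAlgebra 𝕂 𝔸] [CompleteSpace 𝔸]

theorem summable_inv_factorial_succ_smul_pow (x : 𝔸) :
    Summable fun k => ((k + 1)! : 𝕂)⁻¹ • x ^ k := by
  refine .of_norm_bounded (norm_expSeries_summable' (𝕂 := 𝕂) x) fun k => ?_
  simp only [norm_smul, norm_inv, RCLike.norm_natCast]
  gcongr
  exact k.le_succ

theorem hasSum_inv_factorial_succ_smul_pow_succ (x : 𝔸) :
    HasSum (fun k => ((k + 1)! : 𝕂)⁻¹ • x ^ (k + 1)) (exp x - 1) := by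
  simpa using (hasSum_nat_add_iff' 1).2 (exp_series_hasSum_exp' (𝕂 := 𝕂) x)

end ExpSeries

section BlockMatrices

variable {l m n o R : Type*}

theorem Matrix.fromBlocks_zero_zero_pow_succ [Fintype l] [Fintype m] [DecidableEq l]
    [DecidableEq m] [Semiring R] (A : Matrix l l R) (B : Matrix l m R) (k : ℕ) :
    (fromBlocks A B 0 0 : Matrix (l ⊕ m) (l ⊕ m) R) ^ (k + 1) =
      fromBlocks (A ^ (k + 1)) (A ^ k * B) 0 0 := by
  induction k with
  | zero => simp
  | succ k ih => simp [pow_succ' _ (k + 1), ih, fromBlocks_multiply, pow_succ' A, Matrix.mul_assoc]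

theorem HasSum.matrix_fromBlocks {X : Type*} [AddCommMonoid R] [TopologicalSpace R]
    {A : X → Matrix n l R} {B : X → Matrix n m R} {C : X → Matrix o l R} {D : X → Matrix o m R}
    {a : Matrix n l R} {b : Matrix n m R} {c : Matrix o l R} {d : Matrix o m R}
    (hA : HasSum A a) (hB : HasSum B b) (hC : HasSum C c) (hD : HasSum D d) :
    HasSum (fun x => fromBlocks (A x) (B x) (C x) (D x)) (fromBlocks a b c d) := by
  refine Pi.hasSum.2 fun i => Pi.hasSum.2 fun j => ?_
  rcases i with i | i <;> rcases j with j | j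
  · exact Pi.hasSum.1 (Pi.hasSum.1 hA i) j
  · exact Pi.hasSum.1 (Pi.hasSum.1 hB i) j
  · exact Pi.hasSum.1 (Pi.hasSum.1 hC i) j
  · exact Pi.hasSum.1 (Pi.hasSum.1 hD i) j

end BlockMatrices

theorem hasSum_phiMat {n : ℕ} (A : Matrix (Fin n) (Fin n) ℝ) :
    HasSum (fun k => ((k + 1)! : ℝ)⁻¹ • A ^ k) (phiMat n A) := by
  open scoped Matrix.Norms.Operator in
  exact (summable_inv_factorial_succ_smul_pow A).hasSum

theorem exp_fromBlocks_zero_zero {n : ℕ} {p : Type*} [Fintype p] [DecidableEq p]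
    (A : Matrix (Fin n) (Fin n) ℝ) (B : Matrix (Fin n) p ℝ) :
    exp (fromBlocks A B 0 0 : Matrix (Fin n ⊕ p) (Fin n ⊕ p) ℝ) =
      fromBlocks (exp A) (phiMat n A * B) 0 1 := by
  set Ahat : Matrix (Fin n ⊕ p) (Fin n ⊕ p) ℝ := fromBlocks A B 0 0
  have hexp : HasSum (fun k => ((k + 1)! : ℝ)⁻¹ • A ^ (k + 1)) (exp A - 1) := by
    open scoped Matrix.Norms.Operator in
    exact hasSum_inv_factorial_succ_smul_pow_succ A
  have hphi : HasSum (fun k => ((k + 1)! : ℝ)⁻¹ • A ^ k * B) (phiMat n A * B) :=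
    (hasSum_phiMat A).map (addMonoidHomMulRight B) (continuous_id.matrix_mul continuous_const)
  have htail : HasSum (fun k => ((k + 1)! : ℝ)⁻¹ • Ahat ^ (k + 1))
      (fromBlocks (exp A - 1) (phiMat n A * B) 0 0) := by
    convert hexp.matrix_fromBlocks hphi hasSum_zero hasSum_zero using 2 with k
    rw [fromBlocks_zero_zero_pow_succ, fromBlocks_smul, smul_mul, smul_zero, smul_zero]
  have hseries := (hasSum_nat_add_iff (f := fun k => (k ! : ℝ)⁻¹ • Ahat ^ k) 1).1 htail
  rw [exp_eq_tsum ℝ]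
  refine hseries.tsum_eq.trans ?_
  rw [Finset.sum_range_one, pow_zero, factorial_zero, cast_one, inv_one, one_smul,
    ← fromBlocks_one, fromBlocks_add]
  simp

theorem exp_block_matrix_phi_general (n : ℕ)
    (A : Matrix (Fin n) (Fin n) ℝ) (b : Fin n → ℝ) :
    NormedSpace.exp
        (Matrix.fromBlocks A (Matrix.of fun i (_ : Unit) => b i) 0 0
          : Matrix (Fin n ⊕ Unit) (Fin n ⊕ Unit) ℝ)
      = Matrix.fromBlocks (NormedSpace.exp A)
          (Matrix.of fun i (_ : Unit) => (phiMat n A *ᵥ b) i) 0 1 := by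
  have h := exp_fromBlocks_zero_zero A (replicateCol Unit b)
  rwa [← replicateCol_mulVec] at h

/-- For `Â = [[A, b], [0, 0]]` we have `exp(Â) = [[exp(A), φ(A)b], [0, 1]]`;
in particular the top-right block of `exp(Â)` is `φ(A) b`. -/
theorem exp_block_matrix_phi (n : ℕ) (hn : 0 < n)
    (A : Matrix (Fin n) (Fin n) ℝ) (b : Fin n → ℝ) :
    NormedSpace.exp
        (Matrix.fromBlocks A (Matrix.of fun i (_ : Unit) => b i) 0 0
          : Matrix (Fin n ⊕ Unit) (Fin n ⊕ Unit) ℝ)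
      = Matrix.fromBlocks (NormedSpace.exp A)
          (Matrix.of fun i (_ : Unit) => (phiMat n A *ᵥ b) i) 0 1 :=
  exp_block_matrix_phi_general n A b
end

section
/- Let N, k be positive natural numbers, let H ∈ ℝ^{N×N}, U ∈ ℝ^{N×k}, Ĥ ∈ ℝ^{k×k}, u ∈ ℝ^N, and h ∈ ℝ, and suppose the Arnoldi-type relation H U = U Ĥ + h u e_kᵀ holds, where e_k ∈ ℝ^k is the k-th standard basis vector. Assume moreover that Ĥ is upper Hessenberg in the strong sense that e_kᵀ Ĥ^j e₁ = 0 for all 0 ≤ j ≤ k - 2, where e₁ ∈ ℝ^k is the first standard basis vector. Then for every 0 ≤ j ≤ k - 1, H^j (U e₁) = U (Ĥ^j e₁). Consequently, for every polynomial p of degree at most k - 1, p(H) (U e₁) = U (p(Ĥ) e₁). -/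
/-!
Writing `H U = U Ĥ + E`, one step of the power iteration gives
`H (U Ĥʲ e₁) = U Ĥʲ⁺¹ e₁ + E Ĥʲ e₁`. For the rank-one residual `E = h u eₖᵀ` the error term is
`h (eₖᵀ Ĥʲ e₁) u`, which vanishes for `j ≤ k - 2` by the Hessenberg condition, so induction gives
`Hʲ U e₁ = U Ĥʲ e₁` for `j ≤ k - 1`, and linearity extends this to polynomials of degree `≤ k - 1`.
-/

open Matrix Polynomial

namespace Matrix

variable {R m n : Type*} [Fintype m] [DecidableEq m] [Fintype n] [DecidableEq n]

theorem pow_mulVec_mulVec_of_mul_eq_add [Semiring R] {A : Matrix m m R} {U : Matrix m n R}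
    {B : Matrix n n R} {E : Matrix m n R} (hAU : A * U = U * B + E) {x : n → R} {d : ℕ}
    (hE : ∀ j < d, E *ᵥ (B ^ j *ᵥ x) = 0) :
    ∀ j ≤ d, A ^ j *ᵥ (U *ᵥ x) = U *ᵥ (B ^ j *ᵥ x) := by
  intro j hj
  induction j with
  | zero => simp
  | succ j ih =>
    calc A ^ (j + 1) *ᵥ (U *ᵥ x) = (A * U) *ᵥ (B ^ j *ᵥ x) := by
          rw [pow_succ', ← mulVec_mulVec, ih (by omega), mulVec_mulVec]
      _ = U *ᵥ (B ^ (j + 1) *ᵥ x) := by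
          rw [hAU, add_mulVec, hE j (by omega), add_zero, mulVec_mulVec, mulVec_mulVec,
            pow_succ', Matrix.mul_assoc]

theorem aeval_mulVec_mulVec_of_pow [CommSemiring R] {A : Matrix m m R} {U : Matrix m n R}
    {B : Matrix n n R} {x : n → R} {d : ℕ}
    (hpow : ∀ j ≤ d, A ^ j *ᵥ (U *ᵥ x) = U *ᵥ (B ^ j *ᵥ x)) {p : R[X]} (hp : p.natDegree ≤ d) :
    aeval A p *ᵥ (U *ᵥ x) = U *ᵥ (aeval B p *ᵥ x) := by
  rw [aeval_eq_sum_range, aeval_eq_sum_range, sum_mulVec, sum_mulVec, mulVec_sum]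
  refine Finset.sum_congr rfl fun j hj => ?_
  rw [smul_mulVec, smul_mulVec, mulVec_smul, hpow j (by rw [Finset.mem_range] at hj; omega)]

end Matrix

theorem krylov_polynomial_exactness_general (N k : ℕ) (hk : 0 < k)
    (H : Matrix (Fin N) (Fin N) ℝ) (U : Matrix (Fin N) (Fin k) ℝ)
    (Hhat : Matrix (Fin k) (Fin k) ℝ) (u : Fin N → ℝ) (h : ℝ)
    (harnoldi : H * U = U * Hhat
      + h • Matrix.vecMulVec u (Pi.single ⟨k - 1, Nat.sub_lt hk one_pos⟩ 1 : Fin k → ℝ))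
    (hhess : ∀ j : ℕ, j + 2 ≤ k →
      (Pi.single ⟨k - 1, Nat.sub_lt hk one_pos⟩ 1 : Fin k → ℝ) ⬝ᵥ
        (Hhat ^ j *ᵥ (Pi.single ⟨0, hk⟩ 1 : Fin k → ℝ)) = 0) :
    (∀ j : ℕ, j + 1 ≤ k →
      H ^ j *ᵥ (U *ᵥ (Pi.single ⟨0, hk⟩ 1 : Fin k → ℝ))
        = U *ᵥ (Hhat ^ j *ᵥ (Pi.single ⟨0, hk⟩ 1 : Fin k → ℝ))) ∧
    (∀ p : Polynomial ℝ, p.natDegree ≤ k - 1 →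
      (Polynomial.aeval H p) *ᵥ (U *ᵥ (Pi.single ⟨0, hk⟩ 1 : Fin k → ℝ))
        = U *ᵥ ((Polynomial.aeval Hhat p) *ᵥ (Pi.single ⟨0, hk⟩ 1 : Fin k → ℝ))) := by
  have hresidual : ∀ j < k - 1, (h • vecMulVec u (Pi.single ⟨k - 1, Nat.sub_lt hk one_pos⟩ 1))
      *ᵥ (Hhat ^ j *ᵥ (Pi.single ⟨0, hk⟩ 1 : Fin k → ℝ)) = 0 := fun j hj => by
    rw [smul_mulVec, vecMulVec_mulVec, hhess j (by omega)]
    simp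
  have hpow := pow_mulVec_mulVec_of_mul_eq_add harnoldi hresidual
  exact ⟨fun j hj => hpow j (by omega), fun p hp => aeval_mulVec_mulVec_of_pow hpow hp⟩

/-- If `H U = U Ĥ + h u eₖᵀ` (Arnoldi-type relation) and `eₖᵀ Ĥʲ e₁ = 0` for
`0 ≤ j ≤ k - 2`, then `Hʲ (U e₁) = U (Ĥʲ e₁)` for `0 ≤ j ≤ k - 1`, and hence
`p(H) (U e₁) = U (p(Ĥ) e₁)` for every polynomial `p` of degree at most `k - 1`. -/
theorem krylov_polynomial_exactness (N k : ℕ) (hN : 0 < N) (hk : 0 < k)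
    (H : Matrix (Fin N) (Fin N) ℝ) (U : Matrix (Fin N) (Fin k) ℝ)
    (Hhat : Matrix (Fin k) (Fin k) ℝ) (u : Fin N → ℝ) (h : ℝ)
    (harnoldi : H * U = U * Hhat
      + h • Matrix.vecMulVec u (Pi.single ⟨k - 1, Nat.sub_lt hk one_pos⟩ 1 : Fin k → ℝ))
    (hhess : ∀ j : ℕ, j + 2 ≤ k →
      (Pi.single ⟨k - 1, Nat.sub_lt hk one_pos⟩ 1 : Fin k → ℝ) ⬝ᵥ
        (Hhat ^ j *ᵥ (Pi.single ⟨0, hk⟩ 1 : Fin k → ℝ)) = 0) :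
    (∀ j : ℕ, j + 1 ≤ k →
      H ^ j *ᵥ (U *ᵥ (Pi.single ⟨0, hk⟩ 1 : Fin k → ℝ))
        = U *ᵥ (Hhat ^ j *ᵥ (Pi.single ⟨0, hk⟩ 1 : Fin k → ℝ))) ∧
    (∀ p : Polynomial ℝ, p.natDegree ≤ k - 1 →
      (Polynomial.aeval H p) *ᵥ (U *ᵥ (Pi.single ⟨0, hk⟩ 1 : Fin k → ℝ))
        = U *ᵥ ((Polynomial.aeval Hhat p) *ᵥ (Pi.single ⟨0, hk⟩ 1 : Fin k → ℝ))) :=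
  krylov_polynomial_exactness_general N k hk H U Hhat u h harnoldi hhess
end
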